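/- Fix ω ∈ (0,2), m_s > 0, α_s > 0, and γ ∈ (ω² - 4, ω²). Let ζ ∈ (0, π) be defined by 2 cos ζ - 2 + ω² = γ. Then the function ψ_γ : ℤ≤0 → ℝ given by ψ_γ(y) = ( (m_s ω² - α_s γ - 1) sin(ζ y) + sin(ζ(y+1)) ) / sin ζ satisfies: (i) ψ_γ(y+1) + ψ_γ(y-1) - 2ψ_γ(y) + ω² ψ_γ(y) = γ ψ_γ(y) for all y < 0; (ii) ψ_γ(-1) - ψ_γ(0) + m_s ω² ψ_γ(0) = α_s γ ψ_γ(0); (iii) ψ_γ(0) = 1; and (iv) ψ_γ is bounded on ℤ≤0. -/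

import Mathlib

/-!
Both `sin (ζ y)` and `sin (ζ (y + 1))` satisfy `ψ (y + 1) + ψ (y - 1) = 2 cos ζ ψ y`, which is the
bulk equation once `2 cos ζ - 2 + ω² = γ`. Dividing by `sin ζ` makes `ψ 0 = 1`, and then
`ψ (-1)` is minus the coefficient of `sin (ζ y)`, which is chosen to satisfy the surface condition.
Boundedness is that of the sine.
-/

open Real

noncomputable def sinSolution (A ζ x : ℝ) : ℝ :=
  (A * sin (ζ * x) + sin (ζ * (x + 1))) / sin ζ

lemma sin_mul_add_one_add_sin_mul_sub_one (ζ x : ℝ) :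
    sin (ζ * (x + 1)) + sin (ζ * (x - 1)) = 2 * cos ζ * sin (ζ * x) := by
  rw [mul_assoc, mul_comm (cos ζ), ← mul_assoc, two_mul_sin_mul_cos]
  ring_nf

lemma sinSolution_add_one_add_sinSolution_sub_one (A ζ x : ℝ) :
    sinSolution A ζ (x + 1) + sinSolution A ζ (x - 1) = 2 * cos ζ * sinSolution A ζ x := by
  have h₀ := sin_mul_add_one_add_sin_mul_sub_one ζ x
  have h₁ := sin_mul_add_one_add_sin_mul_sub_one ζ (x + 1)
  simp only [sinSolution, add_sub_cancel_right, sub_add_cancel] at h₁ ⊢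
  rw [← add_div, mul_div_assoc']
  congr 1
  linear_combination A * h₀ + h₁

lemma sinSolution_zero (A : ℝ) {ζ : ℝ} (hζ : sin ζ ≠ 0) : sinSolution A ζ 0 = 1 := by
  simp [sinSolution, hζ]

lemma sinSolution_neg_one (A : ℝ) {ζ : ℝ} (hζ : sin ζ ≠ 0) : sinSolution A ζ (-1) = -A := by
  simp [sinSolution, neg_div, mul_div_cancel_right₀ _ hζ]

lemma abs_sinSolution_le (A ζ x : ℝ) : |sinSolution A ζ x| ≤ (|A| + 1) / |sin ζ| := by
  rw [sinSolution, abs_div]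
  gcongr
  calc |A * sin (ζ * x) + sin (ζ * (x + 1))|
      ≤ |A| * |sin (ζ * x)| + |sin (ζ * (x + 1))| := by rw [← abs_mul]; exact abs_add_le _ _
    _ ≤ |A| * 1 + 1 := by gcongr <;> exact abs_sin_le_one _
    _ = |A| + 1 := by ring

theorem stmt3_general (ω ms αs γ ζ : ℝ)
    (hζ : ζ ∈ Set.Ioo (0:ℝ) Real.pi) (hζγ : 2 * Real.cos ζ - 2 + ω ^ 2 = γ)
    (ψ : ℤ → ℝ)
    (hψ : ∀ y : ℤ, ψ y =
      ((ms * ω ^ 2 - αs * γ - 1) * Real.sin (ζ * (y : ℝ)) + Real.sin (ζ * ((y : ℝ) + 1)))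
        / Real.sin ζ) :
    (∀ y : ℤ, y < 0 → ψ (y + 1) + ψ (y - 1) - 2 * ψ y + ω ^ 2 * ψ y = γ * ψ y) ∧
    (ψ (-1) - ψ 0 + ms * ω ^ 2 * ψ 0 = αs * γ * ψ 0) ∧
    (ψ 0 = 1) ∧
    (∃ C : ℝ, ∀ y : ℤ, y ≤ 0 → |ψ y| ≤ C) := by
  set A := ms * ω ^ 2 - αs * γ - 1
  have hψ' : ∀ y : ℤ, ψ y = sinSolution A ζ y := hψ
  have hsin : sin ζ ≠ 0 := (sin_pos_of_pos_of_lt_pi hζ.1 hζ.2).ne'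
  have hψ₀ : ψ 0 = 1 := by simpa [hψ'] using sinSolution_zero A hsin
  refine ⟨fun y _ => ?_, ?_, hψ₀, ⟨(|A| + 1) / |sin ζ|, fun y _ => ?_⟩⟩
  · have := sinSolution_add_one_add_sinSolution_sub_one A ζ y
    simp only [hψ', Int.cast_add, Int.cast_sub, Int.cast_one]
    linear_combination this + sinSolution A ζ y * hζγ
  · have hψneg : ψ (-1) = -A := by simpa [hψ'] using sinSolution_neg_one A hsin
    rw [hψneg, hψ₀]
    ring
  · exact hψ' y ▸ abs_sinSolution_le A ζ y

theorem stmt3 (ω ms αs γ ζ : ℝ) (hω : ω ∈ Set.Ioo (0:ℝ) 2)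
    (hms : 0 < ms) (hαs : 0 < αs) (hγ : γ ∈ Set.Ioo (ω ^ 2 - 4) (ω ^ 2))
    (hζ : ζ ∈ Set.Ioo (0:ℝ) Real.pi) (hζγ : 2 * Real.cos ζ - 2 + ω ^ 2 = γ)
    (ψ : ℤ → ℝ)
    (hψ : ∀ y : ℤ, ψ y =
      ((ms * ω ^ 2 - αs * γ - 1) * Real.sin (ζ * (y : ℝ)) + Real.sin (ζ * ((y : ℝ) + 1)))
        / Real.sin ζ) :
    (∀ y : ℤ, y < 0 → ψ (y + 1) + ψ (y - 1) - 2 * ψ y + ω ^ 2 * ψ y = γ * ψ y) ∧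
    (ψ (-1) - ψ 0 + ms * ω ^ 2 * ψ 0 = αs * γ * ψ 0) ∧
    (ψ 0 = 1) ∧
    (∃ C : ℝ, ∀ y : ℤ, y ≤ 0 → |ψ y| ≤ C) :=
  stmt3_general ω ms αs γ ζ hζ hζγ ψ hψ
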